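/- arXiv:1608.02743 — 4 statements merged into one kernel-verified Lean document; each statement's English description precedes it below -/
import Mathlib

section
/- For the step-down test with boundary tau_SD (or the step-up test with boundary tau_SU) based on the critical values beta_i = i*alpha/(n+1-i*(1-alpha)), 1 <= i <= n, the false discovery rate satisfies the exact identity FDR = (alpha/(n+1)) * E[V(tau)/beta_{R(tau)}] + ((1-alpha)/(n+1)) * E[V(tau)], where tau is the corresponding boundary variable, beta_{R(tau)} denotes the critical value beta indexed by the total number of rejections R(tau) (with beta_0 := beta_1), and the term V(tau)/beta_{R(tau)} is taken to be 0 when V(tau) = 0. -/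
open MeasureTheory Finset
open scoped Classical

noncomputable section

variable {Ω : Type*}

/-- Number of p-values with index in `I` that are `≤ t` (e.g. false rejections `V`). -/
def Vc {n : ℕ} (p : Fin n → Ω → ℝ) (I : Finset (Fin n)) (t : ℝ) (ω : Ω) : ℕ :=
  (I.filter fun i => p i ω ≤ t).card

/-- Total number of rejections `R(t)`. -/
def Rc {n : ℕ} (p : Fin n → Ω → ℝ) (t : ℝ) (ω : Ω) : ℕ :=
  (Finset.univ.filter fun i => p i ω ≤ t).card

/-- Critical values `β_i = iα/(n+1-i(1-α))` (note `β_0 = 0`). -/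
def beta (n : ℕ) (α : ℝ) (i : ℕ) : ℝ := i * α / (n + 1 - i * (1 - α))

/-- Step-down boundary: `max {crit i : p_{j:n} ≤ crit j for all j ≤ i}`, max ∅ := 0.
(`p_{j:n} ≤ c ↔ R(c) ≥ j`.) -/
def tauSD {n : ℕ} (p : Fin n → Ω → ℝ) (crit : ℕ → ℝ) (ω : Ω) : ℝ :=
  if h : ((Finset.Icc 1 n).filter fun i =>
      ∀ j ∈ Finset.Icc 1 i, j ≤ Rc p (crit j) ω).Nonempty then
    (((Finset.Icc 1 n).filter fun i =>
      ∀ j ∈ Finset.Icc 1 i, j ≤ Rc p (crit j) ω)).sup' h crit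
  else 0

/-- Step-up boundary: `max {crit i : p_{i:n} ≤ crit i}`, max ∅ := 0. -/
def tauSU {n : ℕ} (p : Fin n → Ω → ℝ) (crit : ℕ → ℝ) (ω : Ω) : ℝ :=
  if h : ((Finset.Icc 1 n).filter fun i => i ≤ Rc p (crit i) ω).Nonempty then
    ((Finset.Icc 1 n).filter fun i => i ≤ Rc p (crit i) ω).sup' h crit
  else 0

/-- FDR estimator `\hat α_n(t)`. -/
def alphaHat {n : ℕ} (p : Fin n → Ω → ℝ) (t : ℝ) (ω : Ω) : ℝ :=
  (t / (1 - t)) * ((1 - (Rc p t ω : ℝ) / n) / ((Rc p t ω : ℝ) / n + 1 / n))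

/-- `σ = min {crit i : p_{i:n} > crit i} ∧ crit n` (min ∅ := crit n). -/
def sigmaB {n : ℕ} (p : Fin n → Ω → ℝ) (crit : ℕ → ℝ) (ω : Ω) : ℝ :=
  min (if h : ((Finset.Icc 1 n).filter fun i => Rc p (crit i) ω < i).Nonempty then
        ((Finset.Icc 1 n).filter fun i => Rc p (crit i) ω < i).inf' h crit
      else crit n) (crit n)

/-- The filtration `F_t^T`, `T = {0, β_1, ..., β_n}` indexed by `k ∈ {0,...,n}`. -/
def Ffilt {n : ℕ} (p : Fin n → Ω → ℝ) (B : ℕ → ℝ) (k : ℕ) : MeasurableSpace Ω :=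
  MeasurableSpace.generateFrom {A | ∃ i : Fin n, ∃ j ≤ k, A = {ω | p i ω ≤ B j}}

/-- The martingale-type process `M_J(t) = ∑_{i∈J} (1(p_i ≤ t) - t)/(1-t)` at `t`. -/
def Mval {n : ℕ} (p : Fin n → Ω → ℝ) (J : Finset (Fin n)) (t : ℝ) (ω : Ω) : ℝ :=
  ∑ i ∈ J, ((if p i ω ≤ t then (1 : ℝ) else 0) - t) / (1 - t)

/-!
With `k = R(τ) ≥ 1` the critical values satisfy `1 / k = α / ((n + 1) β_k) + (1 - α) / (n + 1)`,
so the identity already holds pointwise, before taking expectations (for `k = 0` both sides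
vanish since `V ≤ R`). All that remains is integrability: `V(τ)` and `R(τ)` are functions of the
random set of rejected hypotheses, which is determined by finitely many measurable events, so every
integrand is measurable and takes only finitely many values.
-/

section RandomFinset

variable {ι : Type*} [MeasurableSpace Ω] [Countable ι] {P : ι → Ω → Prop}
-- The decidability instance is taken by unification: the boundaries in the statement filter with
-- a mixture of classical and structural instances.
variable {_ : ∀ i ω, Decidable (P i ω)}

theorem measurable_filter_comp {β : Type*} [MeasurableSpace β] (s : Finset ι)
    (hP : ∀ i ∈ s, MeasurableSet {ω | P i ω})
    (F : Finset ι → β) : Measurable fun ω => F (s.filter (P · ω)) := by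
  let _ : MeasurableSpace (Finset ι) := ⊤
  refine measurable_from_top.comp (measurable_to_countable' fun t => ?_)
  have hfiber : (fun ω => s.filter (P · ω)) ⁻¹' {t}
      = ⋂ i, {ω | (i ∈ s ∧ P i ω) ↔ i ∈ t} := by
    ext ω; simp [Finset.ext_iff]
  rw [hfiber]
  refine MeasurableSet.iInter fun i => ?_
  by_cases hs : i ∈ s <;> by_cases ht : i ∈ t <;> simp [hs, ht]
  · exact measurableSet_setOfPred.1 (hP i hs)
  · exact (measurableSet_setOfPred.1 (hP i hs)).not

theorem integrable_filter_comp {μ : Measure Ω} [IsFiniteMeasure μ] (s : Finset ι)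
    (hP : ∀ i ∈ s, MeasurableSet {ω | P i ω})
    (G : Finset ι → ℝ) : Integrable (fun ω => G (s.filter (P · ω))) μ :=
  Integrable.of_bound (measurable_filter_comp s hP G).aestronglyMeasurable
    (∑ t ∈ s.powerset, ‖G t‖) <| ae_of_all _ fun _ =>
      Finset.single_le_sum (fun t _ => norm_nonneg (G t))
        (Finset.mem_powerset.2 (Finset.filter_subset _ s))

end RandomFinset

section Boundaries

variable [MeasurableSpace Ω] {n : ℕ} {p : Fin n → Ω → ℝ}

theorem measurable_Rc (hp : ∀ i, Measurable (p i)) (t : ℝ) : Measurable (Rc p t) :=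
  measurable_filter_comp _ (fun i _ => measurableSet_le (hp i) measurable_const) Finset.card

theorem measurable_tauSD (hp : ∀ i, Measurable (p i)) (crit : ℕ → ℝ) :
    Measurable (tauSD p crit) := by
  refine measurable_filter_comp _ (fun i _ => ?_)
    fun s => if h : s.Nonempty then s.sup' h crit else 0
  simp only [Set.ofPred_forall]
  exact .biInter (Finset.Icc 1 i).countable_toSet
    fun j _ => measurable_Rc hp (crit j) measurableSet_Ici

theorem measurable_tauSU (hp : ∀ i, Measurable (p i)) (crit : ℕ → ℝ) :
    Measurable (tauSU p crit) :=
  measurable_filter_comp _ (fun i _ => measurable_Rc hp (crit i) measurableSet_Ici)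
    fun s => if h : s.Nonempty then s.sup' h crit else 0

end Boundaries

theorem div_eq_beta_decomposition {n v r : ℕ} {α : ℝ} (hα : α ∈ Set.Ioo (0 : ℝ) 1)
    (hvr : v ≤ r) (hrn : r ≤ n) :
    (v / r : ℝ) = α / (n + 1) * (v / beta n α (max r 1)) + (1 - α) / (n + 1) * v := by
  obtain ⟨hα0, hα1⟩ := hα
  rcases Nat.eq_zero_or_pos r with rfl | hr
  · simp [Nat.le_zero.1 hvr]
  have hr1 : (1 : ℝ) ≤ r := by exact_mod_cast hr
  have hrn' : (r : ℝ) ≤ n := by exact_mod_cast hrn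
  have hden : (0 : ℝ) < n + 1 - r * (1 - α) := by nlinarith
  rw [max_eq_left hr, beta]
  field_simp
  ring

theorem fdr_identity_beta_general {n : ℕ} [MeasurableSpace Ω] (μ : Measure Ω)
    [IsProbabilityMeasure μ] (p : Fin n → Ω → ℝ) (I0 : Finset (Fin n)) (α : ℝ)
    (hα : α ∈ Set.Ioo (0 : ℝ) 1)
    (hpm : ∀ i, Measurable (p i))
    (τ : Ω → ℝ) (hτ : τ = tauSD p (beta n α) ∨ τ = tauSU p (beta n α)) :
    ∫ ω, (Vc p I0 (τ ω) ω : ℝ) / (Rc p (τ ω) ω : ℝ) ∂μ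
      = α / (n + 1) * ∫ ω, (Vc p I0 (τ ω) ω : ℝ) / beta n α (max (Rc p (τ ω) ω) 1) ∂μ
        + (1 - α) / (n + 1) * ∫ ω, (Vc p I0 (τ ω) ω : ℝ) ∂μ := by
  have hτm : Measurable τ := by
    rcases hτ with rfl | rfl
    exacts [measurable_tauSD hpm _, measurable_tauSU hpm _]
  have hVc : ∀ ω, Vc p I0 (τ ω) ω = (I0.filter (· ∈ univ.filter (p · ω ≤ τ ω))).card := by
    simp [Vc]
  have hint (G : Finset (Fin n) → ℝ) :
      Integrable (fun ω => G (univ.filter (p · ω ≤ τ ω))) μ :=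
    integrable_filter_comp _ (fun i _ => measurableSet_le (hpm i) hτm) G
  simp only [hVc, Rc]
  rw [← integral_const_mul, ← integral_const_mul, ← integral_add]
  · exact integral_congr_ae <| ae_of_all _ fun ω => div_eq_beta_decomposition hα
      (card_le_card fun _ hi => (mem_filter.1 hi).2)
      ((card_le_univ _).trans_eq (Fintype.card_fin n))
  · exact hint fun t => α / (n + 1) * ((I0.filter (· ∈ t)).card / beta n α (max t.card 1))
  · exact hint fun t => (1 - α) / (n + 1) * (I0.filter (· ∈ t)).card

/-- exact FDR identity for the SD/SU tests based on `β_i`. -/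
theorem fdr_identity_beta {n : ℕ} [MeasurableSpace Ω] (μ : Measure Ω)
    [IsProbabilityMeasure μ] (p : Fin n → Ω → ℝ) (I0 : Finset (Fin n)) (α : ℝ)
    (hn : 1 ≤ n) (hα : α ∈ Set.Ioo (0 : ℝ) 1) (hI0 : I0.Nonempty)
    (hp01 : ∀ i ω, p i ω ∈ Set.Icc (0 : ℝ) 1) (hpm : ∀ i, Measurable (p i))
    (τ : Ω → ℝ) (hτ : τ = tauSD p (beta n α) ∨ τ = tauSU p (beta n α)) :
    ∫ ω, (Vc p I0 (τ ω) ω : ℝ) / (Rc p (τ ω) ω : ℝ) ∂μ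
      = α / (n + 1) * ∫ ω, (Vc p I0 (τ ω) ω : ℝ) / beta n α (max (Rc p (τ ω) ω) 1) ∂μ
        + (1 - α) / (n + 1) * ∫ ω, (Vc p I0 (τ ω) ω : ℝ) ∂μ :=
  fdr_identity_beta_general μ p I0 α hα hpm τ hτ

end
end

section
/- For the critical values beta_i = i*alpha/(n+1-i*(1-alpha)), 1 <= i <= n, the random variable sigma = min{beta_i : p_{i:n} > beta_i} ∧ beta_n satisfies sigma = min{beta_i : hat_alpha_n(beta_i) >= alpha, i <= n} ∧ beta_n. -/
open MeasureTheory Finset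
open scoped Classical

noncomputable section

variable {Ω : Type*}

/-!
With `R = R(β_i)`, the estimator reads `α̂_n(β_i) = β_i/(1-β_i) · (n-R)/(R+1)`, and the critical
values are chosen so that `β_i/(1-β_i) = iα/(n+1-i)`. Clearing denominators,
`α ≤ α̂_n(β_i)` becomes `(n+1-i)(R+1) ≤ i(n-R)`, i.e. `(n+1)(R+1) ≤ (n+1)i`, i.e. `R < i`,
which is `p_{i:n} > β_i`. So both minima run over the same index set.
-/

lemma Rc_le {n : ℕ} (p : Fin n → Ω → ℝ) (t : ℝ) (ω : Ω) : Rc p t ω ≤ n :=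
  (card_filter_le _ _).trans (card_univ.trans (Fintype.card_fin n)).le

lemma alphaHat_eq {n : ℕ} (hn : n ≠ 0) (p : Fin n → Ω → ℝ) (t : ℝ) (ω : Ω) :
    alphaHat p t ω = t / (1 - t) * ((n - Rc p t ω) / (Rc p t ω + 1)) := by
  have hn' : (n : ℝ) ≠ 0 := Nat.cast_ne_zero.mpr hn
  rw [alphaHat, one_sub_div hn', ← add_div, div_div_div_cancel_right₀ hn']

lemma beta_div_one_sub_beta {n i : ℕ} {α : ℝ} (hin : i ≤ n) (hα : 0 ≤ α) :
    beta n α i / (1 - beta n α i) = i * α / (n + 1 - i) := by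
  have hin' : (i : ℝ) ≤ n := by exact_mod_cast hin
  have hD : (n + 1 - i * (1 - α) : ℝ) ≠ 0 := by nlinarith
  rw [beta, one_sub_div hD, div_div_div_cancel_right₀ hD]
  ring_nf

lemma le_alphaHat_beta_iff {n i : ℕ} {α : ℝ} (p : Fin n → Ω → ℝ) (ω : Ω)
    (hi : 0 < i) (hin : i ≤ n) (hα : 0 < α) :
    α ≤ alphaHat p (beta n α i) ω ↔ Rc p (beta n α i) ω < i := by
  set R := Rc p (beta n α i) ω
  have hR : (R : ℝ) ≤ n := by exact_mod_cast Rc_le p (beta n α i) ω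
  have hin' : (i : ℝ) ≤ n := by exact_mod_cast hin
  have hden : (0 : ℝ) < (n + 1 - i) * (R + 1) := mul_pos (by linarith) (by positivity)
  rw [alphaHat_eq (by omega), beta_div_one_sub_beta hin hα.le, div_mul_div_comm,
    le_div_iff₀ hden, ← Nat.add_one_le_iff, ← Nat.cast_le (α := ℝ), Nat.cast_add_one]
  have hkey : i * α * (n - R) - α * ((n + 1 - i) * (R + 1)) = α * (n + 1) * (i - (R + 1)) := by
    ring
  have hpos : 0 < α * (n + 1) := by positivity
  rw [← sub_nonneg, hkey, mul_nonneg_iff_of_pos_left hpos, sub_nonneg]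

theorem sigma_eq_min_alphaHat_general {n : ℕ} (p : Fin n → Ω → ℝ) (α : ℝ)
    (hα : α ∈ Set.Ioo (0 : ℝ) 1) :
    ∀ ω : Ω,
      sigmaB p (beta n α) ω
        = min
            (if h : ((Finset.Icc 1 n).filter fun i =>
                α ≤ alphaHat p (beta n α i) ω).Nonempty then
              ((Finset.Icc 1 n).filter fun i =>
                α ≤ alphaHat p (beta n α i) ω).inf' h (beta n α)
            else beta n α n)
            (beta n α n) := by
  intro ω
  have hsame : ((Icc 1 n).filter fun i => Rc p (beta n α i) ω < i)
      = ((Icc 1 n).filter fun i => α ≤ alphaHat p (beta n α i) ω) :=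
    filter_congr fun i hi => by
      obtain ⟨hi₁, hin⟩ := mem_Icc.mp hi
      exact (le_alphaHat_beta_iff p ω hi₁ hin hα.1).symm
  rw [sigmaB, hsame]

/-- `σ = min{β_i : p_{i:n} > β_i} ∧ β_n = min{β_i : \hatα_n(β_i) ≥ α} ∧ β_n`. -/
theorem sigma_eq_min_alphaHat {n : ℕ} (p : Fin n → Ω → ℝ) (α : ℝ)
    (hn : 1 ≤ n) (hα : α ∈ Set.Ioo (0 : ℝ) 1)
    (hp01 : ∀ i ω, p i ω ∈ Set.Icc (0 : ℝ) 1) :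
    ∀ ω : Ω,
      sigmaB p (beta n α) ω
        = min
            (if h : ((Finset.Icc 1 n).filter fun i =>
                α ≤ alphaHat p (beta n α i) ω).Nonempty then
              ((Finset.Icc 1 n).filter fun i =>
                α ≤ alphaHat p (beta n α i) ω).inf' h (beta n α)
            else beta n α n)
            (beta n α n) :=
  sigma_eq_min_alphaHat_general p α hα

end
end

section
/- Suppose the p-values are PRDS on I_0 and each p_i, i in I_0, is stochastically larger than the uniform distribution on (0,1), i.e. P(p_i <= x) <= x for all x in [0,1]. Then for the step-down test with critical values beta_i = i*alpha/(n+1-i*(1-alpha)) one has E[V(tau_SD)/tau_SD] <= n_0, where V(tau_SD)/tau_SD is taken to be 0 on the event tau_SD = 0. -/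
open MeasureTheory Finset
open scoped Classical

noncomputable section

variable {Ω : Type*}

/-- Positive regression dependence on the subset `I` (PRDS): for each `i ∈ I` and each
coordinatewise nondecreasing integrable `f`, `x ↦ E[f(p₁,...,pₙ) ∣ p_i = x]` is
nondecreasing, i.e. some nondecreasing `g` composed with `p_i` is a version of the
conditional expectation of `f(p)` given `σ(p_i)`. -/
def PRDS {n : ℕ} [MeasurableSpace Ω] (μ : Measure Ω) (p : Fin n → Ω → ℝ)
    (I : Finset (Fin n)) : Prop :=
  ∀ i ∈ I, ∀ f : (Fin n → ℝ) → ℝ, Monotone f →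
    Integrable (fun ω => f fun j => p j ω) μ →
      ∃ g : ℝ → ℝ, Monotone g ∧
        (fun ω => g (p i ω))
          =ᵐ[μ] μ[(fun ω => f fun j => p j ω)|MeasurableSpace.comap (p i) inferInstance]

/-!
Write `E_k` for the event that the step-down test rejects at least `k` hypotheses. The events
`E_k` decrease in `k`, `E_{n+1} = ∅`, each `E_k` is the preimage of a lower set of p-value vectors,
and `τ_SD = β_k` on `E_k \ E_{k+1}`. Hence
`E[V(τ_SD)/τ_SD] = ∑_{i ∈ I₀} ∑_k (P(E_k, p_i ≤ β_k) - P(E_{k+1}, p_i ≤ β_k)) / β_k`.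
By PRDS, `x ↦ P(E | p_i ≤ x)` is nonincreasing for such `E`; together with `P(p_i ≤ β_k) ≤ β_k`
this bounds the `k`-th term by `r_k - r_{k+1}` with `r_k = P(E_k | p_i ≤ β_k)`, and the sum
telescopes to at most `r_1 ≤ 1`.
-/

lemma setIntegral_Iic_mul_le_of_monotone (ν : Measure ℝ) [IsFiniteMeasure ν] {h : ℝ → ℝ}
    (hh : Monotone h) (hint : Integrable h ν) {x y : ℝ} (hxy : x ≤ y) :
    (∫ u in Set.Iic x, h u ∂ν) * ν.real (Set.Iic y) ≤
      (∫ u in Set.Iic y, h u ∂ν) * ν.real (Set.Iic x) := by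
  have hdisj : Disjoint (Set.Iic x) (Set.Ioc x y) := Set.Iic_disjoint_Ioc le_rfl
  rw [← Set.Iic_union_Ioc_eq_Iic hxy, measureReal_union hdisj measurableSet_Ioc,
    setIntegral_union hdisj measurableSet_Ioc hint.integrableOn hint.integrableOn]
  have hlow : ∫ u in Set.Iic x, h u ∂ν ≤ ν.real (Set.Iic x) * h x := by
    rw [← smul_eq_mul, ← setIntegral_const]
    exact setIntegral_mono_on hint.integrableOn (integrableOn_const (measure_ne_top ν _))
      measurableSet_Iic fun u hu => hh hu
  have hhigh : ν.real (Set.Ioc x y) * h x ≤ ∫ u in Set.Ioc x y, h u ∂ν := by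
    rw [← smul_eq_mul, ← setIntegral_const]
    exact setIntegral_mono_on (integrableOn_const (measure_ne_top ν _)) hint.integrableOn
      measurableSet_Ioc fun u hu => hh hu.1.le
  nlinarith [mul_le_mul_of_nonneg_right hlow (measureReal_nonneg (μ := ν) (s := Set.Ioc x y)),
    mul_le_mul_of_nonneg_right hhigh (measureReal_nonneg (μ := ν) (s := Set.Iic x))]

lemma measureReal_inter_preimage_eq_setIntegral_map {β : Type*} [mβ : MeasurableSpace β]
    [MeasurableSpace Ω] {μ : Measure Ω} [IsFiniteMeasure μ] {U : Ω → β} (hU : Measurable U)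
    {D : Set Ω} (hD : MeasurableSet D) {h : β → ℝ} (hh : Measurable h)
    (hcond : (fun ω => h (U ω)) =ᵐ[μ] μ[D.indicator 1 | mβ.comap U]) {S : Set β}
    (hS : MeasurableSet S) :
    μ.real (D ∩ U ⁻¹' S) = ∫ u in S, h u ∂(μ.map U) := by
  rw [setIntegral_map hS hh.aestronglyMeasurable hU.aemeasurable,
    setIntegral_congr_ae (hU hS) (hcond.mono fun ω hω _ => hω),
    setIntegral_condExp hU.comap_le ((integrable_const 1).indicator hD) ⟨S, hS, rfl⟩,
    integral_indicator_one hD, measureReal_restrict_apply hD, Set.inter_comm]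

lemma sum_sub_div_le_one {n : ℕ} {a b ν c : ℕ → ℝ} (hb : ∀ k, 0 ≤ b k) (hba : ∀ k, b k ≤ a k)
    (haν : ∀ k, a k ≤ ν k) (hνc : ∀ k ∈ Icc 1 n, ν k ≤ c k)
    (hν : ∀ k ∈ Icc 1 n, ν k ≤ ν (k + 1))
    (hab : ∀ k ∈ Icc 1 n, a (k + 1) * ν k ≤ b k * ν (k + 1)) (htop : a (n + 1) = 0) :
    ∑ k ∈ Icc 1 n, (a k - b k) / c k ≤ 1 := by
  -- `r k` is `a k / ν k` read as a conditional probability, with value `1` when `ν k = 0`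
  set r : ℕ → ℝ := fun k => if ν k = 0 then 1 else a k / ν k
  have hr_le_one : ∀ k, r k ≤ 1 := fun k => by
    by_cases h : ν k = 0
    · simp [r, h]
    · simp only [r, h, if_false]
      exact div_le_one_of_le₀ (haν k) ((hb k).trans ((hba k).trans (haν k)))
  have hr_top : 0 ≤ r (n + 1) := by
    by_cases h : ν (n + 1) = 0 <;> simp [r, h, htop]
  have hstep : ∀ k ∈ Icc 1 n, (a k - b k) / c k ≤ r k - r (k + 1) := fun k hk => by
    have hν0 : 0 ≤ ν k := (hb k).trans ((hba k).trans (haν k))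
    rcases hν0.eq_or_lt with h | hpos
    · have ha : a k = 0 := le_antisymm (h ▸ haν k) ((hb k).trans (hba k))
      have hb0 : b k = 0 := le_antisymm (ha ▸ hba k) (hb k)
      simp [r, ← h, ha, hb0, hr_le_one (k + 1)]
    · have hpos' : 0 < ν (k + 1) := hpos.trans_le (hν k hk)
      have hr_succ : r (k + 1) ≤ b k / ν k := by
        simp only [r, hpos'.ne', if_false]
        rw [div_le_div_iff₀ hpos' hpos]
        exact hab k hk
      calc (a k - b k) / c k ≤ (a k - b k) / ν k :=
            div_le_div_of_nonneg_left (sub_nonneg.2 (hba k)) hpos (hνc k hk)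
        _ = r k - b k / ν k := by simp [r, hpos.ne', sub_div]
        _ ≤ r k - r (k + 1) := by linarith
  calc ∑ k ∈ Icc 1 n, (a k - b k) / c k ≤ ∑ k ∈ Icc 1 n, (r k - r (k + 1)) := sum_le_sum hstep
    _ = r 1 - r (n + 1) := by
      rw [← Ico_add_one_right_eq_Icc, ← neg_sub, ← sum_Ico_sub (f := r) (by omega),
        ← sum_neg_distrib]
      simp only [neg_sub]
    _ ≤ 1 := by linarith [hr_le_one 1]

lemma Antitone.exists_mem_sdiff {α : Type*} {s : ℕ → Set α} (hs : Antitone s) {x : α} {m : ℕ}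
    (hm : x ∈ s m) {N : ℕ} (hN : x ∉ s N) : ∃ k ∈ Ico m N, x ∈ s k \ s (k + 1) := by
  induction N with
  | zero => exact absurd (hs m.zero_le hm) hN
  | succ N ih =>
    by_cases hx : x ∈ s N
    · refine ⟨N, mem_Ico.2 ⟨?_, N.lt_succ_self⟩, hx, hN⟩
      by_contra! h
      exact hN (hs h hm)
    · obtain ⟨k, hk, hxk⟩ := ih hx
      exact ⟨k, mem_Ico.2 ⟨(mem_Ico.1 hk).1, (mem_Ico.1 hk).2.trans N.lt_succ_self⟩, hxk⟩

lemma Antitone.eq_of_mem_sdiff {α : Type*} {s : ℕ → Set α} (hs : Antitone s) {x : α} {k l : ℕ}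
    (hk : x ∈ s k \ s (k + 1)) (hl : x ∈ s l \ s (l + 1)) : k = l := by
  by_contra hne
  rcases Nat.lt_or_gt_of_ne hne with h | h
  · exact hk.2 (hs h hl.1)
  · exact hl.2 (hs h hk.1)

namespace PRDS

variable {n : ℕ} [MeasurableSpace Ω] {μ : Measure Ω} [IsFiniteMeasure μ] {p : Fin n → Ω → ℝ}
  {I : Finset (Fin n)} {i : Fin n} {C : Set (Fin n → ℝ)} {x y : ℝ}

lemma measureReal_inter_mul_le_of_isUpperSet (hprds : PRDS μ p I) (hpm : ∀ i, Measurable (p i))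
    (hi : i ∈ I) (hC : IsUpperSet C) (hCm : MeasurableSet C) (hxy : x ≤ y) :
    μ.real (Function.swap p ⁻¹' C ∩ {ω | p i ω ≤ x}) * μ.real {ω | p i ω ≤ y} ≤
      μ.real (Function.swap p ⁻¹' C ∩ {ω | p i ω ≤ y}) * μ.real {ω | p i ω ≤ x} := by
  have hD : MeasurableSet (Function.swap p ⁻¹' C) := measurable_pi_lambda _ hpm hCm
  have hf : Monotone (C.indicator (1 : (Fin n → ℝ) → ℝ)) := fun u v huv => by
    by_cases hu : u ∈ C
    · simp [hu, hC huv hu]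
    · simp [hu, Set.indicator_nonneg]
  obtain ⟨g, hg, hgD⟩ := hprds i hi _ hf ((integrable_const 1).indicator hD)
  have hlaw : ∀ z, μ.real {ω | p i ω ≤ z} = (μ.map (p i)).real (Set.Iic z) := fun z => by
    rw [map_measureReal_apply (hpm i) measurableSet_Iic]; rfl
  have hcond : ∀ z, μ.real (Function.swap p ⁻¹' C ∩ {ω | p i ω ≤ z}) =
      ∫ u in Set.Iic z, g u ∂(μ.map (p i)) := fun z =>
    measureReal_inter_preimage_eq_setIntegral_map (hpm i) hD hg.measurable hgD measurableSet_Iic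
  rw [hcond, hcond, hlaw, hlaw]
  refine setIntegral_Iic_mul_le_of_monotone _ hg ?_ hxy
  rw [integrable_map_measure hg.measurable.aestronglyMeasurable (hpm i).aemeasurable]
  exact integrable_condExp.congr hgD.symm

lemma measureReal_inter_mul_le_of_isLowerSet (hprds : PRDS μ p I) (hpm : ∀ i, Measurable (p i))
    (hi : i ∈ I) (hC : IsLowerSet C) (hCm : MeasurableSet C) (hxy : x ≤ y) :
    μ.real (Function.swap p ⁻¹' C ∩ {ω | p i ω ≤ y}) * μ.real {ω | p i ω ≤ x} ≤
      μ.real (Function.swap p ⁻¹' C ∩ {ω | p i ω ≤ x}) * μ.real {ω | p i ω ≤ y} := by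
  have hcompl : ∀ z, μ.real (Function.swap p ⁻¹' C ∩ {ω | p i ω ≤ z}) =
      μ.real {ω | p i ω ≤ z} - μ.real (Function.swap p ⁻¹' Cᶜ ∩ {ω | p i ω ≤ z}) := fun z => by
    rw [Set.preimage_compl, ← Set.sdiff_eq_compl_inter,
      ← measureReal_inter_add_sdiff (s := {ω | p i ω ≤ z}) (measurable_pi_lambda _ hpm hCm),
      Set.inter_comm]
    ring
  have hupper := measureReal_inter_mul_le_of_isUpperSet hprds hpm hi hC.compl hCm.compl hxy
  rw [hcompl, hcompl]
  linear_combination hupper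

end PRDS

/-- The p-value vectors `x` on which the step-down test rejects at least `k` hypotheses:
`x_{j:n} ≤ crit j` for all `j ≤ k`. -/
def stepDownSet {n : ℕ} (crit : ℕ → ℝ) (k : ℕ) : Set (Fin n → ℝ) :=
  {x | ∀ j ∈ Icc 1 k, j ≤ (univ.filter fun i => x i ≤ crit j).card}

section StepDown

variable {n : ℕ} {crit : ℕ → ℝ}

lemma isLowerSet_stepDownSet (k : ℕ) : IsLowerSet (stepDownSet (n := n) crit k) :=
  fun _ _ hyx hx j hj => (hx j hj).trans <| card_le_card <| monotone_filter_right _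
    fun i _ hi => (hyx i).trans hi

lemma measurableSet_stepDownSet (k : ℕ) : MeasurableSet (stepDownSet (n := n) crit k) := by
  simp only [stepDownSet, Set.ofPred_forall, card_filter]
  exact .iInter fun j => .iInter fun _ => measurableSet_le measurable_const <|
    Finset.measurable_sum _ fun i _ => Measurable.ite
      (measurableSet_le (measurable_pi_apply i) measurable_const) measurable_const measurable_const

lemma stepDownSet_antitone : Antitone (stepDownSet (n := n) crit) :=
  fun _ _ hkl _ hx j hj => hx j (Icc_subset_Icc_right hkl hj)

lemma stepDownSet_succ_eq_empty : stepDownSet (n := n) crit (n + 1) = ∅ := by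
  refine Set.eq_empty_of_forall_notMem fun x hx => ?_
  have := (hx (n + 1) (right_mem_Icc.2 n.succ_pos)).trans (card_filter_le _ _)
  simp at this

lemma le_of_mem_stepDownSet {x : Fin n → ℝ} {k : ℕ} (hx : x ∈ stepDownSet crit k) : k ≤ n := by
  by_contra! h
  simpa [stepDownSet_succ_eq_empty] using stepDownSet_antitone h hx

variable {p : Fin n → Ω → ℝ} {ω : Ω}

lemma tauSD_eq_of_mem_sdiff (hcrit : MonotoneOn crit (Set.Icc 1 n)) {k : ℕ} (hk : 1 ≤ k)
    (hω : Function.swap p ω ∈ stepDownSet crit k \ stepDownSet crit (k + 1)) :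
    tauSD p crit ω = crit k := by
  have hkn := le_of_mem_stepDownSet hω.1
  rw [tauSD, filter_congr_decidable, dif_pos ⟨k, mem_filter.2 ⟨mem_Icc.2 ⟨hk, hkn⟩, hω.1⟩⟩]
  refine le_antisymm (sup'_le _ _ fun i hi => ?_)
    (le_sup' crit (mem_filter.2 ⟨mem_Icc.2 ⟨hk, hkn⟩, hω.1⟩))
  obtain ⟨hi, hiS⟩ := mem_filter.1 hi
  have hik : i ≤ k := not_lt.1 fun hki => hω.2 (stepDownSet_antitone hki hiS)
  exact hcrit ⟨(mem_Icc.1 hi).1, hik.trans hkn⟩ ⟨hk, hkn⟩ hik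

lemma tauSD_eq_zero (hω : Function.swap p ω ∉ stepDownSet crit 1) : tauSD p crit ω = 0 := by
  rw [tauSD, filter_congr_decidable, dif_neg]
  rintro ⟨i, hi⟩
  rw [mem_filter, mem_Icc] at hi
  exact hω (stepDownSet_antitone hi.1.1 hi.2)

end StepDown

section Integral

variable {n : ℕ} {crit : ℕ → ℝ} {p : Fin n → Ω → ℝ}

lemma Vc_tauSD_div_eq_sum_indicator (hcrit : MonotoneOn crit (Set.Icc 1 n))
    (I : Finset (Fin n)) (ω : Ω) :
    (Vc p I (tauSD p crit ω) ω : ℝ) / tauSD p crit ω =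
      ∑ k ∈ Icc 1 n, ∑ i ∈ I,
        (Function.swap p ⁻¹' (stepDownSet crit k \ stepDownSet crit (k + 1)) ∩
          {ω | p i ω ≤ crit k}).indicator (fun _ => (crit k)⁻¹) ω := by
  by_cases h1 : Function.swap p ω ∈ stepDownSet crit 1
  · obtain ⟨K, hK, hωK⟩ := stepDownSet_antitone.exists_mem_sdiff h1 (N := n + 1)
      (by simp [stepDownSet_succ_eq_empty])
    rw [Finset.mem_Ico, Nat.lt_succ_iff] at hK
    rw [tauSD_eq_of_mem_sdiff hcrit hK.1 hωK, sum_eq_single_of_mem K (mem_Icc.2 hK)]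
    · simp only [Set.indicator_apply, Set.mem_inter_iff, Set.mem_preimage, hωK, true_and,
        Set.mem_ofPred_eq, ← sum_filter, sum_const, nsmul_eq_mul, Vc, div_eq_mul_inv]
    · intro k _ hkK
      refine sum_eq_zero fun i _ => Set.indicator_of_notMem (fun hω => hkK ?_) _
      exact stepDownSet_antitone.eq_of_mem_sdiff hω.1 hωK
  · rw [tauSD_eq_zero h1, div_zero]
    refine (sum_eq_zero fun k hk => sum_eq_zero fun i _ => ?_).symm
    exact Set.indicator_of_notMem
      (fun hω => h1 (stepDownSet_antitone (mem_Icc.1 hk).1 hω.1.1)) _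

variable [MeasurableSpace Ω]

lemma integral_Vc_tauSD_div (μ : Measure Ω) [IsFiniteMeasure μ] (hpm : ∀ i, Measurable (p i))
    (hcrit : MonotoneOn crit (Set.Icc 1 n)) (I : Finset (Fin n)) :
    ∫ ω, (Vc p I (tauSD p crit ω) ω : ℝ) / tauSD p crit ω ∂μ =
      ∑ i ∈ I, ∑ k ∈ Icc 1 n,
        (μ.real (Function.swap p ⁻¹' stepDownSet crit k ∩ {ω | p i ω ≤ crit k}) -
          μ.real (Function.swap p ⁻¹' stepDownSet crit (k + 1) ∩ {ω | p i ω ≤ crit k})) /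
          crit k := by
  have hE : ∀ k, MeasurableSet (Function.swap p ⁻¹' stepDownSet crit k) := fun k =>
    measurable_pi_lambda _ hpm (measurableSet_stepDownSet k)
  have hT : ∀ i t, MeasurableSet {ω | p i ω ≤ t} := fun i _ =>
    measurableSet_le (hpm i) measurable_const
  have hET : ∀ k i, MeasurableSet (Function.swap p ⁻¹' (stepDownSet crit k \
      stepDownSet crit (k + 1)) ∩ {ω | p i ω ≤ crit k}) := fun k i =>
    ((hE k).diff (hE (k + 1))).inter (hT i _)
  simp_rw [Vc_tauSD_div_eq_sum_indicator hcrit]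
  rw [integral_finsetSum _ fun k _ => integrable_finsetSum _ fun i _ =>
    (integrable_const _).indicator (hET k i), sum_comm]
  refine sum_congr rfl fun k _ => ?_
  rw [integral_finsetSum _ fun i _ => (integrable_const _).indicator (hET k i)]
  refine sum_congr rfl fun i _ => ?_
  rw [integral_indicator_const _ (hET k i), Set.preimage_sdiff, Set.inter_sdiff_distrib_right,
    measureReal_sdiff (Set.inter_subset_inter_left _ <| Set.preimage_mono <|
      stepDownSet_antitone k.le_succ) ((hE _).inter (hT i _)), smul_eq_mul, div_eq_mul_inv]

end Integral

lemma PRDS.sum_stepDown_le_one {n : ℕ} [MeasurableSpace Ω] {μ : Measure Ω} [IsFiniteMeasure μ]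
    {p : Fin n → Ω → ℝ} {I : Finset (Fin n)} (hprds : PRDS μ p I) (hpm : ∀ i, Measurable (p i))
    {i : Fin n} (hi : i ∈ I) {crit : ℕ → ℝ} (hcrit : MonotoneOn crit (Set.Icc 1 (n + 1)))
    (hstoch : ∀ k ∈ Icc 1 n, μ.real {ω | p i ω ≤ crit k} ≤ crit k) :
    ∑ k ∈ Icc 1 n,
      (μ.real (Function.swap p ⁻¹' stepDownSet crit k ∩ {ω | p i ω ≤ crit k}) -
        μ.real (Function.swap p ⁻¹' stepDownSet crit (k + 1) ∩ {ω | p i ω ≤ crit k})) /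
        crit k ≤ 1 := by
  have hcrit_succ : ∀ k ∈ Icc 1 n, crit k ≤ crit (k + 1) := fun k hk => by
    obtain ⟨hk1, hkn⟩ := mem_Icc.1 hk
    exact hcrit ⟨hk1, by omega⟩ ⟨by omega, by omega⟩ k.le_succ
  refine sum_sub_div_le_one (fun _ => measureReal_nonneg)
    (fun k => measureReal_mono <| Set.inter_subset_inter_left _ <| Set.preimage_mono <|
      stepDownSet_antitone k.le_succ)
    (fun _ => measureReal_mono Set.inter_subset_right) hstoch
    (fun k hk => measureReal_mono fun ω hω => le_trans hω (hcrit_succ k hk))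
    (fun k hk => hprds.measureReal_inter_mul_le_of_isLowerSet hpm hi
      (isLowerSet_stepDownSet _) (measurableSet_stepDownSet _) (hcrit_succ k hk))
    (by simp [stepDownSet_succ_eq_empty])

section Beta

variable {n k : ℕ} {α : ℝ}

lemma beta_denom_pos (hα : α ∈ Set.Ioo 0 1) (hk : k ≤ n + 1) : 0 < (n : ℝ) + 1 - k * (1 - α) := by
  have hk' : (k : ℝ) ≤ n + 1 := by exact_mod_cast hk
  nlinarith [hα.1, hα.2]

lemma beta_mem_Icc (hα : α ∈ Set.Ioo 0 1) (hk : k ≤ n + 1) : beta n α k ∈ Set.Icc 0 1 := by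
  have hk' : (k : ℝ) ≤ n + 1 := by exact_mod_cast hk
  refine ⟨div_nonneg (mul_nonneg k.cast_nonneg hα.1.le) (beta_denom_pos hα hk).le, ?_⟩
  rw [beta, div_le_one (beta_denom_pos hα hk)]
  nlinarith [hα.1, hα.2]

lemma beta_monotoneOn (hα : α ∈ Set.Ioo 0 1) : MonotoneOn (beta n α) (Set.Iic (n + 1)) :=
  fun j _ k hk hjk => by
    have hjk' : (j : ℝ) ≤ k := by exact_mod_cast hjk
    exact div_le_div₀ (mul_nonneg k.cast_nonneg hα.1.le)
      (mul_le_mul_of_nonneg_right hjk' hα.1.le) (beta_denom_pos hα hk)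
      (by nlinarith [hα.2])

end Beta

theorem v_over_tau_le_n0_general {n : ℕ} [MeasurableSpace Ω] (μ : Measure Ω)
    [IsProbabilityMeasure μ] (p : Fin n → Ω → ℝ) (I0 : Finset (Fin n)) (α : ℝ)
    (hα : α ∈ Set.Ioo (0 : ℝ) 1) (hpm : ∀ i, Measurable (p i))
    (hprds : PRDS μ p I0)
    (hstoch : ∀ i ∈ I0, ∀ x ∈ Set.Icc (0 : ℝ) 1, μ {ω | p i ω ≤ x} ≤ ENNReal.ofReal x) :
    ∫ ω, (Vc p I0 (tauSD p (beta n α) ω) ω : ℝ) / tauSD p (beta n α) ω ∂μ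
      ≤ I0.card := by
  have hβ : MonotoneOn (beta n α) (Set.Icc 1 (n + 1)) :=
    (beta_monotoneOn hα).mono Set.Icc_subset_Iic_self
  have hstoch' : ∀ i ∈ I0, ∀ k ∈ Icc 1 n, μ.real {ω | p i ω ≤ beta n α k} ≤ beta n α k :=
    fun i hi k hk => by
      have hβk := beta_mem_Icc hα ((mem_Icc.1 hk).2.trans n.le_succ)
      exact ENNReal.toReal_le_of_le_ofReal hβk.1 (hstoch i hi _ hβk)
  rw [integral_Vc_tauSD_div μ hpm (hβ.mono (Set.Icc_subset_Icc_right n.le_succ))]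
  calc _ ≤ ∑ _i ∈ I0, (1 : ℝ) :=
        sum_le_sum fun i hi => hprds.sum_stepDown_le_one hpm hi hβ (hstoch' i hi)
    _ = I0.card := by simp

/-- under PRDS on `I_0` and null p-values stochastically larger than
uniform, `E[V(τ_SD)/τ_SD] ≤ n₀` for the `β_i`-based SD test. -/
theorem v_over_tau_le_n0 {n : ℕ} [MeasurableSpace Ω] (μ : Measure Ω)
    [IsProbabilityMeasure μ] (p : Fin n → Ω → ℝ) (I0 : Finset (Fin n)) (α : ℝ)
    (hn : 1 ≤ n) (hα : α ∈ Set.Ioo (0 : ℝ) 1) (hI0 : I0.Nonempty)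
    (hp01 : ∀ i ω, p i ω ∈ Set.Icc (0 : ℝ) 1) (hpm : ∀ i, Measurable (p i))
    (hprds : PRDS μ p I0)
    (hstoch : ∀ i ∈ I0, ∀ x ∈ Set.Icc (0 : ℝ) 1, μ {ω | p i ω ≤ x} ≤ ENNReal.ofReal x) :
    ∫ ω, (Vc p I0 (tauSD p (beta n α) ω) ω : ℝ) / tauSD p (beta n α) ω ∂μ
      ≤ I0.card :=
  v_over_tau_le_n0_general μ p I0 α hα hpm hprds hstoch
end
end

section
/- Suppose the process t -> M_{I_0}(t) = sum_{i in I_0} (1(p_i <= t) - t)/(1-t), t in T = {0, beta_1, ..., beta_n}, is a martingale with respect to the enlarged filtration (F^f_t)_{t in T}, where F^f_t is generated by {1(p_i <= s) : s <= t, s in T, i in I_0} together with all p_j, j in I_1. Define beta_0 := 0 and the F^f_0-measurable random thresholds c(j) = (j - 1 - S(beta_j) - n_0*beta_j)/(1 - beta_j). Then for every i >= 2, E[ M_{I_0}(beta_{i-1}) * prod_{j=0}^{i-2} 1(M_{I_0}(beta_j) >= c(j)) ] >= 0. -/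
open MeasureTheory Finset
open scoped Classical

noncomputable section

variable {Ω : Type*}

/-- The enlarged filtration `F^f_t`. -/
def Ff {n : ℕ} [MeasurableSpace Ω] (p : Fin n → Ω → ℝ) (I0 : Finset (Fin n))
    (B : ℕ → ℝ) (k : ℕ) : MeasurableSpace Ω :=
  MeasurableSpace.generateFrom {A | ∃ i ∈ I0, ∃ j ≤ k, A = {ω | p i ω ≤ B j}} ⊔
    ⨆ i ∈ I0ᶜ, MeasurableSpace.comap (p i) inferInstance

/-!
Let `A_k` be the event `M(β_j) ≥ c(j)` for all `j < k`. The thresholds `c(j)` depend only on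
the p-values of false nulls, so they are `F^f_0`-measurable, and one proves by induction on `k`
that `∫_{B ∩ A_k} M(β_k) ≥ 0` for every `B ∈ F^f_0`. For the step, `B ∩ A_{k+1}` is an
`F^f_k`-event, so the martingale property replaces `M(β_{k+1})` by `M(β_k)` on it; then the
pointwise bound `M · 1(c ≤ M) ≥ M · 1(c ≤ 0)` lowers the integral to one over
`(B ∩ {c(k) ≤ 0}) ∩ A_k`, which is the induction hypothesis. The base case is `M(β_0) = M(0) ≥ 0`.
-/

theorem measurableSet_setOf_forall_lt_le {m : MeasurableSpace Ω} {c M : ℕ → Ω → ℝ} {l : ℕ}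
    (hc : ∀ j < l, Measurable[m] (c j)) (hM : ∀ j < l, Measurable[m] (M j)) :
    MeasurableSet[m] {ω | ∀ j < l, c j ω ≤ M j ω} := by
  simp only [Set.ofPred_forall]
  exact MeasurableSet.iInter fun j => MeasurableSet.iInter fun hj =>
    measurableSet_le (hc j hj) (hM j hj)

theorem setIntegral_inter_setOf_le_zero_le {m : MeasurableSpace Ω} {μ : Measure Ω}
    {f g : Ω → ℝ} {S : Set Ω} (hf : Measurable f) (hg : Measurable g) (hfi : Integrable f μ)
    (hS : MeasurableSet S) :
    ∫ ω in S ∩ {ω | g ω ≤ 0}, f ω ∂μ ≤ ∫ ω in S ∩ {ω | g ω ≤ f ω}, f ω ∂μ := by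
  have h₀ : MeasurableSet (S ∩ {ω | g ω ≤ 0}) := hS.inter (measurableSet_le hg measurable_const)
  have h₁ : MeasurableSet (S ∩ {ω | g ω ≤ f ω}) := hS.inter (measurableSet_le hg hf)
  rw [← integral_indicator h₀, ← integral_indicator h₁]
  refine integral_mono (hfi.indicator h₀) (hfi.indicator h₁) fun ω => ?_
  simp only [Set.indicator_apply, Set.mem_inter_iff, Set.mem_ofPred_eq]
  split_ifs <;> grind

theorem setIntegral_inter_setOf_forall_le_nonneg {m : MeasurableSpace Ω} {μ : Measure Ω}
    (ℱ : Filtration ℕ m) {M c : ℕ → Ω → ℝ} {N : ℕ}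
    (hM : ∀ k, Measurable[ℱ k] (M k)) (hMi : ∀ k, Integrable (M k) μ)
    (hmart : ∀ k < N, ∀ A, MeasurableSet[ℱ k] A →
      ∫ ω in A, M (k + 1) ω ∂μ = ∫ ω in A, M k ω ∂μ)
    (hM0 : 0 ≤ M 0) (hc : ∀ j, Measurable[ℱ 0] (c j)) :
    ∀ k ≤ N, ∀ B, MeasurableSet[ℱ 0] B →
      0 ≤ ∫ ω in B ∩ {ω | ∀ j < k, c j ω ≤ M j ω}, M k ω ∂μ := by
  have hstop : ∀ {k l}, l ≤ k + 1 → MeasurableSet[ℱ k] {ω | ∀ j < l, c j ω ≤ M j ω} :=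
    fun hl => measurableSet_setOf_forall_lt_le
      (fun j _ => (hc j).mono (ℱ.mono (Nat.zero_le _)) le_rfl)
      (fun j hj => (hM j).mono (ℱ.mono (by omega)) le_rfl)
  intro k
  induction k with
  | zero => exact fun _ _ _ => integral_nonneg hM0
  | succ k ih =>
    intro hk B hB
    have hB' : MeasurableSet[ℱ 0] (B ∩ {ω | c k ω ≤ 0}) :=
      hB.inter (measurableSet_le (hc k) measurable_const)
    calc 0 ≤ ∫ ω in B ∩ {ω | c k ω ≤ 0} ∩ {ω | ∀ j < k, c j ω ≤ M j ω}, M k ω ∂μ :=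
          ih (by omega) _ hB'
      _ = ∫ ω in B ∩ {ω | ∀ j < k, c j ω ≤ M j ω} ∩ {ω | c k ω ≤ 0}, M k ω ∂μ := by
          rw [Set.inter_right_comm]
      _ ≤ ∫ ω in B ∩ {ω | ∀ j < k, c j ω ≤ M j ω} ∩ {ω | c k ω ≤ M k ω}, M k ω ∂μ :=
          setIntegral_inter_setOf_le_zero_le ((hM k).mono (ℱ.le k) le_rfl)
            ((hc k).mono (ℱ.le 0) le_rfl) (hMi k)
            (ℱ.le k _ ((ℱ.mono (Nat.zero_le k) _ hB).inter (hstop k.le_succ)))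
      _ = ∫ ω in B ∩ {ω | ∀ j < k + 1, c j ω ≤ M j ω}, M k ω ∂μ := by
          simp only [Nat.forall_lt_succ_right, Set.ofPred_and, Set.inter_assoc]
      _ = ∫ ω in B ∩ {ω | ∀ j < k + 1, c j ω ≤ M j ω}, M (k + 1) ω ∂μ :=
          (hmart k hk _ ((ℱ.mono (Nat.zero_le k) _ hB).inter (hstop le_rfl))).symm

theorem integral_mul_prod_ite_le {m : MeasurableSpace Ω} {μ : Measure Ω} {f : Ω → ℝ}
    {c M : ℕ → Ω → ℝ} {k : ℕ} (hA : MeasurableSet {ω | ∀ j < k, c j ω ≤ M j ω}) :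
    ∫ ω, f ω * ∏ j ∈ range k, (if c j ω ≤ M j ω then (1 : ℝ) else 0) ∂μ
      = ∫ ω in {ω | ∀ j < k, c j ω ≤ M j ω}, f ω ∂μ := by
  rw [← integral_indicator hA]
  congr 1
  ext ω
  simp only [prod_boole, mem_range, mul_ite, mul_one, mul_zero, Set.indicator_apply,
    Set.mem_ofPred_eq]

section EnlargedFiltration

variable {n : ℕ} [MeasurableSpace Ω] {p : Fin n → Ω → ℝ} {I0 : Finset (Fin n)} {B : ℕ → ℝ}

theorem Ff_mono : Monotone (Ff p I0 B) := by
  intro j k hjk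
  refine sup_le_sup_right (MeasurableSpace.generateFrom_mono ?_) _
  rintro _ ⟨i, hi, l, hl, rfl⟩
  exact ⟨i, hi, l, hl.trans hjk, rfl⟩

theorem Ff_le (hp : ∀ i, Measurable (p i)) (k : ℕ) : Ff p I0 B k ≤ ‹MeasurableSpace Ω› :=
  sup_le (MeasurableSpace.generateFrom_le fun _ ⟨i, _, _, _, hA⟩ =>
      hA ▸ measurableSet_le (hp i) measurable_const)
    (iSup₂_le fun i _ => (hp i).comap_le)

def Ff.filtration (hp : ∀ i, Measurable (p i)) : Filtration ℕ ‹MeasurableSpace Ω› :=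
  ⟨Ff p I0 B, Ff_mono, Ff_le hp⟩

theorem measurable_Mval_Ff (k : ℕ) : Measurable[Ff p I0 B k] (Mval p I0 (B k)) := by
  refine Finset.measurable_sum _ fun i hi => ?_
  have hset : MeasurableSet[Ff p I0 B k] {ω | p i ω ≤ B k} :=
    le_sup_left (a := MeasurableSpace.generateFrom _) _
      (MeasurableSpace.measurableSet_generateFrom ⟨i, hi, k, le_rfl, rfl⟩)
  exact ((Measurable.ite hset measurable_const measurable_const).sub measurable_const).div_const _

theorem measurable_Vc_compl_Ff (t : ℝ) (k : ℕ) : Measurable[Ff p I0 B k] (Vc p I0ᶜ t) := by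
  unfold Vc
  simp only [card_filter]
  refine Finset.measurable_sum _ fun i hi => Measurable.ite ?_ measurable_const measurable_const
  exact le_sup_right.trans' (le_iSup₂ (f := fun i _ => MeasurableSpace.comap (p i) inferInstance)
    i hi) _ ⟨Set.Iic t, measurableSet_Iic, rfl⟩

end EnlargedFiltration

theorem integrable_Mval {n : ℕ} {m : MeasurableSpace Ω} {μ : Measure Ω} [IsFiniteMeasure μ]
    {p : Fin n → Ω → ℝ} (hp : ∀ i, Measurable (p i)) (J : Finset (Fin n)) (t : ℝ) :
    Integrable (Mval p J t) μ := by
  refine integrable_finsetSum _ fun i _ => ?_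
  have hs : MeasurableSet {ω | p i ω ≤ t} := measurableSet_le (hp i) measurable_const
  have h := (((integrable_const (μ := μ) (1 : ℝ)).indicator hs).sub (integrable_const t)).div_const
    (1 - t)
  refine h.congr (Filter.Eventually.of_forall fun ω => ?_)
  simp [Set.indicator_apply]

theorem Mval_zero_nonneg {n : ℕ} (p : Fin n → Ω → ℝ) (J : Finset (Fin n)) : 0 ≤ Mval p J 0 :=
  fun ω => Finset.sum_nonneg fun i _ => by split_ifs <;> norm_num

theorem beta_zero (n : ℕ) (α : ℝ) : beta n α 0 = 0 := by simp [beta]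

theorem mart_indicator_product_nonneg_general {n : ℕ} [MeasurableSpace Ω] (μ : Measure Ω)
    [IsProbabilityMeasure μ] (p : Fin n → Ω → ℝ) (I0 : Finset (Fin n)) (α : ℝ)
    (hpm : ∀ i, Measurable (p i))
    (hmart : ∀ j k : ℕ, j ≤ k → k ≤ n → ∀ A : Set Ω,
      MeasurableSet[Ff p I0 (beta n α) j] A →
        ∫ ω in A, Mval p I0 (beta n α k) ω ∂μ = ∫ ω in A, Mval p I0 (beta n α j) ω ∂μ)
    (c : ℕ → Ω → ℝ)
    (hc : ∀ j ω, c j ω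
      = ((j : ℝ) - 1 - (Vc p I0ᶜ (beta n α j) ω : ℝ) - (I0.card : ℝ) * beta n α j)
        / (1 - beta n α j)) :
    ∀ i : ℕ, 2 ≤ i → i ≤ n →
      0 ≤ ∫ ω, Mval p I0 (beta n α (i - 1)) ω
            * ∏ j ∈ Finset.range (i - 1),
                (if c j ω ≤ Mval p I0 (beta n α j) ω then (1 : ℝ) else 0) ∂μ := by
  intro i _ hin
  let ℱ : Filtration ℕ _ := Ff.filtration (I0 := I0) (B := beta n α) hpm
  have hM : ∀ k, Measurable[ℱ k] (Mval p I0 (beta n α k)) := measurable_Mval_Ff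
  have hc₀ : ∀ j, Measurable[ℱ 0] (c j) := fun j => by
    rw [show c j = _ from funext (hc j)]
    exact ((measurable_const.sub (measurable_from_nat.comp (measurable_Vc_compl_Ff _ 0))).sub
      measurable_const).div_const _
  rw [integral_mul_prod_ite_le (measurableSet_setOf_forall_lt_le
    (fun j _ => (hc₀ j).mono (ℱ.le 0) le_rfl) (fun j _ => (hM j).mono (ℱ.le j) le_rfl))]
  simpa using setIntegral_inter_setOf_forall_le_nonneg ℱ hM (fun _ => integrable_Mval hpm _ _)
    (fun k hk => hmart k (k + 1) k.le_succ hk) (by rw [beta_zero]; exact Mval_zero_nonneg p I0)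
    hc₀ (i - 1) (by omega) Set.univ MeasurableSet.univ

/-- under martingale dependence w.r.t. the enlarged filtration `F^f`,
with thresholds `c(j) = (j-1-S(β_j)-n₀β_j)/(1-β_j)`, for every `i ≥ 2` one has
`E[M(β_{i-1})·∏_{j=0}^{i-2} 1(M(β_j) ≥ c(j))] ≥ 0`.  (Note `β_0 = 0`.) -/
theorem mart_indicator_product_nonneg {n : ℕ} [MeasurableSpace Ω] (μ : Measure Ω)
    [IsProbabilityMeasure μ] (p : Fin n → Ω → ℝ) (I0 : Finset (Fin n)) (α : ℝ)
    (hn : 1 ≤ n) (hα : α ∈ Set.Ioo (0 : ℝ) 1) (hI0 : I0.Nonempty)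
    (hp01 : ∀ i ω, p i ω ∈ Set.Icc (0 : ℝ) 1) (hpm : ∀ i, Measurable (p i))
    (hmart : ∀ j k : ℕ, j ≤ k → k ≤ n → ∀ A : Set Ω,
      MeasurableSet[Ff p I0 (beta n α) j] A →
        ∫ ω in A, Mval p I0 (beta n α k) ω ∂μ = ∫ ω in A, Mval p I0 (beta n α j) ω ∂μ)
    (c : ℕ → Ω → ℝ)
    (hc : ∀ j ω, c j ω
      = ((j : ℝ) - 1 - (Vc p I0ᶜ (beta n α j) ω : ℝ) - (I0.card : ℝ) * beta n α j)
        / (1 - beta n α j)) :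
    ∀ i : ℕ, 2 ≤ i → i ≤ n →
      0 ≤ ∫ ω, Mval p I0 (beta n α (i - 1)) ω
            * ∏ j ∈ Finset.range (i - 1),
                (if c j ω ≤ Mval p I0 (beta n α j) ω then (1 : ℝ) else 0) ∂μ :=
  mart_indicator_product_nonneg_general μ p I0 α hpm hmart c hc

end
end
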